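/- For each positive integer n, let g_n(α) = sin²(nπα/2) for |α| ≤ 1 if n is even, g_n(α) = cos²(nπα/2) for |α| ≤ 1 if n is odd, and g_n(α) = 0 for |α| > 1. Then g_n is even and in L¹(ℝ), its Fourier transform is ĝ_n(t) = (sin(2πt)/(2πt))·(n²/(n² − 4t²)); one has the bounds |ĝ_n(t)| ≪ 1/(|t|+1) for 0 ≤ |t| ≤ n/4, |ĝ_n(t)| ≪ 1 for n/4 < |t| < n, and |ĝ_n(t)| ≪ n²/|t|³ for |t| ≥ n, so ĝ_n ∈ L¹(ℝ); and for integers k, ĝ_n(k/2) = 1 if k = 0, ĝ_n(k/2) = (−1)^{n+1}/2 if k = ±n, and ĝ_n(k/2) = 0 otherwise. -/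

import Mathlib

open scoped Classical
open Real Filter MeasureTheory

noncomputable section

/-- The function `g_n`: `sin²(nπα/2)` (for even `n`) or `cos²(nπα/2)` (for odd `n`)
on `|α| ≤ 1`, and `0` outside. -/
def gnfun (n : ℕ) (α : ℝ) : ℝ :=
  if |α| ≤ 1 then
    (if Even n then Real.sin (n * π * α / 2) ^ 2 else Real.cos (n * π * α / 2) ^ 2)
  else 0

/-- The Fourier transform of `g_n`:
`ĝ_n(t) = (sin(2πt)/(2πt))·(n²/(n² - 4t²))`, with the removable singularities at
`t = 0` and `t = ±n/2` interpreted by their limiting values. -/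
def gnhat (n : ℕ) (t : ℝ) : ℝ :=
  if t = 0 then 1
  else if t = (n:ℝ)/2 ∨ t = -((n:ℝ)/2) then (-1 : ℝ)^(n+1) / 2
  else Real.sin (2*π*t) / (2*π*t) * ((n:ℝ)^2 / ((n:ℝ)^2 - 4*t^2))

/-! On `[-1, 1]` the function `g_n` equals `1/2 + (-1)^(n+1)/2 · cos(nπα)`, so its Fourier transform
is a combination of three translates of `2 sinc(2πt)`, the transform of the indicator of `[-1, 1]`:
`ĝ_n(t) = sinc(2πt) + (-1)^(n+1)/2 · (sinc(2π(t - n/2)) + sinc(2π(t + n/2)))`.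
This form is continuous, bounded by `2`, and its values at half-integers come from
`sinc(mπ) = [m = 0]`. Away from `t = 0, ±n/2` it collapses to the closed form of `gnhat`, whose
modulus is at most `n² / (2π|t| · |n² - 4t²|)`; this gives the decay estimates. -/

lemma sinc_int_mul_pi (m : ℤ) : sinc (m * π) = if m = 0 then 1 else 0 := by
  split_ifs with hm
  · simp [hm]
  · rw [sinc_of_ne_zero (by simp [hm, pi_ne_zero]), sin_int_mul_pi, zero_div]

open Complex in
lemma integral_exp_neg_two_pi_I_mul (a s : ℝ) :
    ∫ x in -a..a, cexp (-2 * π * I * s * x) = ((2 * a * sinc (2 * π * a * s) : ℝ) : ℂ) := by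
  rcases eq_or_ne s 0 with rfl | hs
  · simp [two_mul]
  rcases eq_or_ne a 0 with rfl | ha
  · simp
  have hc : -2 * π * I * s ≠ 0 := by simp [hs, pi_ne_zero]
  rw [integral_exp_mul_complex hc, sinc_of_ne_zero (by positivity)]
  have e₁ : -2 * π * I * s * a = -(2 * π * a * s : ℝ) * I := by push_cast; ring
  have e₂ : -2 * π * I * s * ((-a : ℝ) : ℂ) = (2 * π * a * s : ℝ) * I := by push_cast; ring
  rw [e₁, e₂, exp_mul_I, exp_mul_I, Complex.cos_neg, Complex.sin_neg]
  have ha' : (a : ℂ) ≠ 0 := by exact_mod_cast ha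
  push_cast
  field_simp
  ring

open Complex in
lemma cos_mul_exp_neg_two_pi_I_mul (ν t α : ℝ) :
    (Real.cos (2 * π * ν * α) : ℂ) * cexp (-2 * π * I * t * α)
      = (cexp (-2 * π * I * (t - ν) * α) + cexp (-2 * π * I * (t + ν) * α)) / 2 := by
  have e₁ : -2 * π * I * (t - ν) * α = (2 * π * ν * α : ℝ) * I + -2 * π * I * t * α := by
    push_cast; ring
  have e₂ : -2 * π * I * (t + ν) * α = -(2 * π * ν * α : ℝ) * I + -2 * π * I * t * α := by
    push_cast; ring
  rw [ofReal_cos, Complex.cos, e₁, e₂, Complex.exp_add, Complex.exp_add]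
  ring

lemma gnfun_neg (n : ℕ) (α : ℝ) : gnfun n (-α) = gnfun n α := by
  have h : (n : ℝ) * π * -α / 2 = -(n * π * α / 2) := by ring
  simp only [gnfun, abs_neg, h, Real.sin_neg, Real.cos_neg, neg_sq]

lemma gnfun_eq_indicator (n : ℕ) :
    gnfun n = (Set.Icc (-1) 1).indicator fun α => 1 / 2 + (-1) ^ (n + 1) / 2 * Real.cos (n * π * α) := by
  ext α
  have h : Real.cos (n * π * α) = Real.cos (2 * (n * π * α / 2)) := by ring_nf
  by_cases hα : |α| ≤ 1
  · rw [gnfun, if_pos hα, Set.indicator_of_mem (Set.mem_Icc.mpr (abs_le.mp hα)), h]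
    split_ifs with he
    · rw [pow_succ (-1 : ℝ), he.neg_one_pow, Real.sin_sq_eq_half_sub]; ring
    · rw [pow_succ (-1 : ℝ), (Nat.not_even_iff_odd.mp he).neg_one_pow, Real.cos_sq]; ring
  · rw [gnfun, if_neg hα, Set.indicator_of_notMem (mt (abs_le.mpr ∘ Set.mem_Icc.mp) hα)]

lemma integrable_gnfun (n : ℕ) : Integrable (gnfun n) := by
  rw [gnfun_eq_indicator]
  exact (Continuous.integrableOn_Icc (by fun_prop)).integrable_indicator measurableSet_Icc

def gnhatSinc (n : ℕ) (t : ℝ) : ℝ :=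
  sinc (2 * π * t) + (-1) ^ (n + 1) / 2 * (sinc (2 * π * (t - n / 2)) + sinc (2 * π * (t + n / 2)))

open Complex in
lemma integral_gnfun_mul_exp (n : ℕ) (t : ℝ) :
    ∫ α, (gnfun n α : ℂ) * cexp (-2 * π * I * t * α) = gnhatSinc n t := by
  set e : ℝ → ℝ → ℂ := fun s α => cexp (-2 * π * I * s * α) with he
  have hind : (fun α => (gnfun n α : ℂ) * e t α) = (Set.Icc (-1) 1).indicator fun α =>
      1 / 2 * e t α + (-1) ^ (n + 1) / 4 * (e (t - n / 2) α + e (t + n / 2) α) := by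
    ext α
    have hcos : Real.cos (n * π * α) = Real.cos (2 * π * (n / 2) * α) := by ring_nf
    rw [gnfun_eq_indicator]
    by_cases hα : α ∈ Set.Icc (-1 : ℝ) 1
    · rw [Set.indicator_of_mem hα, Set.indicator_of_mem hα, hcos, ofReal_add, ofReal_mul, add_mul,
        mul_assoc, cos_mul_exp_neg_two_pi_I_mul]
      simp only [he]
      push_cast
      ring
    · simp only [Set.indicator_of_notMem hα, ofReal_zero, zero_mul]
  have hint (s : ℝ) : IntervalIntegrable (e s) volume (-1) 1 :=
    (by fun_prop : Continuous _).intervalIntegrable _ _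
  rw [hind, integral_indicator measurableSet_Icc, integral_Icc_eq_integral_Ioc,
    ← intervalIntegral.integral_of_le (by norm_num),
    intervalIntegral.integral_add ((hint _).const_mul _) (((hint _).add (hint _)).const_mul _),
    intervalIntegral.integral_const_mul, intervalIntegral.integral_const_mul,
    intervalIntegral.integral_add (hint _) (hint _)]
  simp only [he, integral_exp_neg_two_pi_I_mul, gnhatSinc, mul_one]
  push_cast
  ring

lemma continuous_gnhatSinc (n : ℕ) : Continuous (gnhatSinc n) := by
  unfold gnhatSinc
  fun_prop

lemma abs_gnhatSinc_le_two (n : ℕ) (t : ℝ) : |gnhatSinc n t| ≤ 2 := by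
  calc |gnhatSinc n t|
      ≤ |sinc (2 * π * t)| + |(-1 : ℝ) ^ (n + 1) / 2| *
          (|sinc (2 * π * (t - n / 2))| + |sinc (2 * π * (t + n / 2))|) := by
        rw [gnhatSinc]
        exact (abs_add_le _ _).trans (by rw [abs_mul]; gcongr; exact abs_add_le _ _)
    _ ≤ 1 + 1 / 2 * (1 + 1) := by
        rw [abs_div, abs_pow, abs_neg, abs_one, one_pow, abs_two]
        gcongr <;> exact abs_sinc_le_one _
    _ = 2 := by norm_num

lemma gnhatSinc_half_int (n : ℕ) (k : ℤ) :
    gnhatSinc n (k / 2) = (if k = 0 then 1 else 0) +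
      (-1) ^ (n + 1) / 2 * ((if k = n then 1 else 0) + (if k = -n then 1 else 0)) := by
  have h₀ : 2 * π * (k / 2) = k * π := by ring
  have h₁ : 2 * π * (k / 2 - n / 2) = ((k - n : ℤ) : ℝ) * π := by push_cast; ring
  have h₂ : 2 * π * (k / 2 + n / 2) = ((k + n : ℤ) : ℝ) * π := by push_cast; ring
  simp only [gnhatSinc, h₀, h₁, h₂, sinc_int_mul_pi, sub_eq_zero, add_eq_zero_iff_eq_neg]

lemma gnhatSinc_of_ne (n : ℕ) {t : ℝ} (ht : t ≠ 0) (htn : t ≠ n / 2) (htn' : t ≠ -(n / 2)) :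
    gnhatSinc n t = sin (2 * π * t) / (2 * π * t) * (n ^ 2 / (n ^ 2 - 4 * t ^ 2)) := by
  have h₁ : 2 * π * (t - n / 2) = 2 * π * t - n * π := by ring
  have h₂ : 2 * π * (t + n / 2) = 2 * π * t + n * π := by ring
  have hπ := pi_pos.ne'
  have hm : t - n / 2 ≠ 0 := sub_ne_zero.mpr htn
  have hp : t + n / 2 ≠ 0 := fun h => htn' (by linarith)
  rw [gnhatSinc, sinc_of_ne_zero (by positivity), sinc_of_ne_zero (by simp [hπ, hm]),
    sinc_of_ne_zero (by simp [hπ, hp]), h₁, h₂, sin_sub_nat_mul_pi, sin_add_nat_mul_pi, pow_succ]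
  have hm' : 2 * t - n ≠ 0 := fun h => hm (by linarith)
  have hp' : 2 * t + n ≠ 0 := fun h => hp (by linarith)
  have hsq : ((-1 : ℝ) ^ n) ^ 2 = 1 := by rw [← pow_mul, mul_comm, pow_mul, neg_one_sq, one_pow]
  rw [show (n : ℝ) ^ 2 - 4 * t ^ 2 = -((2 * t - n) * (2 * t + n)) by ring]
  field_simp
  rw [hsq]
  ring

lemma gnhat_eq_gnhatSinc (n : ℕ) (hn : n ≠ 0) : gnhat n = gnhatSinc n := by
  ext t
  rw [gnhat]
  split_ifs with h₀ h₁
  · have hn' : (0 : ℤ) ≠ n := by exact_mod_cast hn.symm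
    simpa [h₀, hn, hn'] using (gnhatSinc_half_int n 0).symm
  · rcases h₁ with rfl | rfl
    · simpa [hn] using (gnhatSinc_half_int n n).symm
    · simpa [hn, neg_div] using (gnhatSinc_half_int n (-n)).symm
  · rw [not_or] at h₁
    exact (gnhatSinc_of_ne n h₀ h₁.1 h₁.2).symm

lemma abs_gnhat_le_two {n : ℕ} (hn : n ≠ 0) (t : ℝ) : |gnhat n t| ≤ 2 := by
  rw [gnhat_eq_gnhatSinc n hn]
  exact abs_gnhatSinc_le_two n t

lemma abs_gnhat_le_of_ne (n : ℕ) {t : ℝ} (ht : t ≠ 0) (htn : 2 * |t| ≠ n) :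
    |gnhat n t| ≤ n ^ 2 / (2 * π * |t| * |n ^ 2 - 4 * t ^ 2|) := by
  have htn' : ¬(t = n / 2 ∨ t = -(n / 2)) := by
    rintro (rfl | rfl) <;>
      simp [abs_of_nonneg (by positivity : (0 : ℝ) ≤ n / 2), mul_div_cancel₀] at htn
  rw [gnhat, if_neg ht, if_neg htn']
  calc _ = |sin (2 * π * t)| * (n ^ 2 / (2 * π * |t| * |n ^ 2 - 4 * t ^ 2|)) := by
        simp only [abs_mul, abs_div, Nat.abs_ofNat, abs_of_pos pi_pos, abs_pow, Nat.abs_cast]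
        ring
    _ ≤ 1 * (n ^ 2 / (2 * π * |t| * |n ^ 2 - 4 * t ^ 2|)) := by
        gcongr; exact abs_sin_le_one _
    _ = _ := one_mul _

lemma abs_gnhat_le_of_abs_le {n : ℕ} (hn : 1 ≤ n) {t : ℝ} (h : |t| ≤ n / 4) :
    |gnhat n t| ≤ 4 / (|t| + 1) := by
  have hn' : (1 : ℝ) ≤ n := by exact_mod_cast hn
  rcases le_or_gt |t| 1 with ht₁ | ht₁
  · calc |gnhat n t| ≤ 2 := abs_gnhat_le_two (by omega) t
      _ ≤ 4 / (|t| + 1) := by rw [le_div_iff₀ (by positivity)]; linarith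
  have ht : t ≠ 0 := by rintro rfl; simp at ht₁; linarith
  have hd : 3 * (n : ℝ) ^ 2 / 4 ≤ |(n : ℝ) ^ 2 - 4 * t ^ 2| := by
    rw [← sq_abs t]
    nlinarith [le_abs_self ((n : ℝ) ^ 2 - 4 * |t| ^ 2), abs_nonneg t]
  calc |gnhat n t| ≤ n ^ 2 / (2 * π * |t| * |n ^ 2 - 4 * t ^ 2|) :=
        abs_gnhat_le_of_ne n ht (by linarith)
    _ ≤ n ^ 2 / (2 * π * |t| * (3 * n ^ 2 / 4)) := by gcongr
    _ = 2 / (3 * π * |t|) := by field_simp; ring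
    _ ≤ 4 / (|t| + 1) := by
        rw [div_le_div_iff₀ (by positivity) (by positivity)]
        nlinarith [pi_gt_three]

lemma abs_gnhat_le_of_le_abs {n : ℕ} (hn : 1 ≤ n) {t : ℝ} (h : n ≤ |t|) :
    |gnhat n t| ≤ n ^ 2 / |t| ^ 3 := by
  have hn' : (1 : ℝ) ≤ n := by exact_mod_cast hn
  have ht : t ≠ 0 := by rintro rfl; simp at h; linarith
  have hd : 3 * |t| ^ 2 ≤ |(n : ℝ) ^ 2 - 4 * t ^ 2| := by
    rw [← sq_abs t]
    nlinarith [neg_abs_le ((n : ℝ) ^ 2 - 4 * |t| ^ 2)]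
  calc |gnhat n t| ≤ n ^ 2 / (2 * π * |t| * |n ^ 2 - 4 * t ^ 2|) :=
        abs_gnhat_le_of_ne n ht (by linarith)
    _ ≤ n ^ 2 / (2 * π * |t| * (3 * |t| ^ 2)) := by gcongr
    _ ≤ n ^ 2 / |t| ^ 3 := by
        gcongr
        nlinarith [pi_gt_three, pow_pos (abs_pos.mpr ht) 3]

lemma abs_gnhat_le_inv_one_add_sq {n : ℕ} (hn : 1 ≤ n) (t : ℝ) :
    |gnhat n t| ≤ 2 * (n ^ 2 + 1) * (1 + t ^ 2)⁻¹ := by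
  have hn' : (1 : ℝ) ≤ n := by exact_mod_cast hn
  rw [← div_eq_mul_inv, ← sq_abs t]
  rcases le_or_gt |t| n with h | h
  · calc |gnhat n t| ≤ 2 := abs_gnhat_le_two (by omega) t
      _ ≤ _ := by
        rw [le_div_iff₀ (by positivity)]
        nlinarith [abs_nonneg t]
  · have ht₁ : 1 ≤ |t| := by linarith
    have ht₂ : |t| ^ 2 ≤ |t| ^ 3 := pow_le_pow_right₀ ht₁ (by norm_num)
    have ht₃ : 1 ≤ |t| ^ 3 := one_le_pow₀ ht₁
    calc |gnhat n t| ≤ n ^ 2 / |t| ^ 3 := abs_gnhat_le_of_le_abs hn h.le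
      _ ≤ _ := by
        rw [div_le_div_iff₀ (by positivity) (by positivity)]
        nlinarith

lemma integrable_gnhat {n : ℕ} (hn : 1 ≤ n) : Integrable (gnhat n) := by
  refine (integrable_inv_one_add_sq.const_mul _).mono' ?_
    (Eventually.of_forall fun t => (Real.norm_eq_abs _).trans_le (abs_gnhat_le_inv_one_add_sq hn t))
  rw [gnhat_eq_gnhatSinc n (by omega)]
  exact (continuous_gnhatSinc n).aestronglyMeasurable

/-- **Lemma 4.** For `n ≥ 1`, `g_n` is even and in `L¹(ℝ)`; its Fourier transform is
`ĝ_n(t) = (sin(2πt)/(2πt))(n²/(n²-4t²))`; one has `|ĝ_n(t)| ≪ 1/(|t|+1)` for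
`|t| ≤ n/4`, `|ĝ_n(t)| ≪ 1` for `n/4 < |t| < n`, `|ĝ_n(t)| ≪ n²/|t|³` for `|t| ≥ n`;
hence `ĝ_n ∈ L¹(ℝ)`; and for integers `k`, `ĝ_n(k/2) = 1` if `k = 0`,
`= (-1)^{n+1}/2` if `k = ±n`, and `= 0` otherwise. -/
theorem gn_fourier_pair (n : ℕ) (hn : 1 ≤ n) :
    (∀ α : ℝ, gnfun n (-α) = gnfun n α) ∧
    Integrable (gnfun n) ∧
    (∀ t : ℝ,
      (∫ α : ℝ, (gnfun n α : ℂ) * Complex.exp (-2 * π * Complex.I * t * α))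
        = ((gnhat n t : ℝ) : ℂ)) ∧
    (∃ C : ℝ, 0 < C ∧ ∀ t : ℝ,
      (|t| ≤ (n:ℝ)/4 → |gnhat n t| ≤ C / (|t| + 1)) ∧
      ((n:ℝ)/4 < |t| → |t| < (n:ℝ) → |gnhat n t| ≤ C) ∧
      ((n:ℝ) ≤ |t| → |gnhat n t| ≤ C * (n:ℝ)^2 / |t|^3)) ∧
    Integrable (gnhat n) ∧
    (∀ k : ℤ, gnhat n ((k:ℝ)/2) =
      if k = 0 then 1
      else if k = (n:ℤ) ∨ k = -(n:ℤ) then (-1 : ℝ)^(n+1) / 2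
      else 0) := by
  have hn₀ : n ≠ 0 := by omega
  refine ⟨gnfun_neg n, integrable_gnfun n, fun t => ?_, ⟨4, by norm_num, fun t => ⟨?_, ?_, ?_⟩⟩,
    integrable_gnhat hn, fun k => ?_⟩
  · rw [integral_gnfun_mul_exp, gnhat_eq_gnhatSinc n hn₀]
  · exact abs_gnhat_le_of_abs_le hn
  · exact fun _ _ => (abs_gnhat_le_two hn₀ t).trans (by norm_num)
  · intro h
    have : 0 ≤ (n : ℝ) ^ 2 / |t| ^ 3 := by positivity
    calc |gnhat n t| ≤ n ^ 2 / |t| ^ 3 := abs_gnhat_le_of_le_abs hn h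
      _ ≤ 4 * n ^ 2 / |t| ^ 3 := by rw [mul_div_assoc]; linarith
  · rw [gnhat_eq_gnhatSinc n hn₀, gnhatSinc_half_int]
    split_ifs <;> simp_all

end
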